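/- arXiv:2508.19678 — 6 statements merged into one kernel-verified Lean document; each statement's English description precedes it below -/
import Mathlib

section
/- Let m ≥ 1 be a natural number and φ_1, …, φ_m ∈ (0,1] real constants. Let ψ_0, ψ_1, …, ψ_m : ℕ → ℝ be real sequences satisfying ψ_l(t) = ψ_{l−1}(t+1) − ψ_{l−1}(t) + φ_l·ψ_{l−1}(t) for all l = 1,…,m and all t ∈ ℕ. If ψ_m(t) ≥ 0 for all t ∈ ℕ and ψ_l(0) ≥ 0 for all l = 0,…,m−1, then ψ_l(t) ≥ 0 for all l = 0,…,m−1 and all t ∈ ℕ. -/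
/-! Each level is a discrete first-order barrier for the one below it: rearranging the recursion,
`ψ_l(t+1) = ψ_{l+1}(t) + (1 - φ_{l+1}) ψ_l(t)`, a sum of two nonnegative terms once `ψ_{l+1} ≥ 0`
and `ψ_l(t) ≥ 0`. Induction on `t` propagates `ψ_l(0) ≥ 0` along time, and a downward induction
on `l` starting from `ψ_m ≥ 0` propagates nonnegativity down the hierarchy. -/

theorem nonneg_of_sub_add_mul_nonneg {u : ℕ → ℝ} {c : ℝ} (hc : c ≤ 1) (h0 : 0 ≤ u 0)
    (hstep : ∀ t, 0 ≤ u (t + 1) - u t + c * u t) (t : ℕ) : 0 ≤ u t := by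
  induction t with
  | zero => exact h0
  | succ t ih =>
    have hdamped : 0 ≤ (1 - c) * u t := mul_nonneg (sub_nonneg.2 hc) ih
    linarith [hstep t]

theorem dhcbf_hierarchy_nonneg_general (m : ℕ) (φ : ℕ → ℝ)
    (hφ : ∀ l : ℕ, 1 ≤ l → l ≤ m → 0 < φ l ∧ φ l ≤ 1)
    (ψ : ℕ → ℕ → ℝ)
    (hrec : ∀ l < m, ∀ t : ℕ,
      ψ (l + 1) t = ψ l (t + 1) - ψ l t + φ (l + 1) * ψ l t)
    (htop : ∀ t : ℕ, ψ m t ≥ 0)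
    (hinit : ∀ l < m, ψ l 0 ≥ 0) :
    ∀ l < m, ∀ t : ℕ, ψ l t ≥ 0 := by
  have hdown : ∀ l (hl : l ≤ m), ∀ t, 0 ≤ ψ l t := fun l hl =>
    Nat.decreasingInduction (motive := fun l _ => ∀ t, 0 ≤ ψ l t)
      (fun l hl hnext => nonneg_of_sub_add_mul_nonneg (hφ (l + 1) l.succ_pos hl).2 (hinit l hl)
        fun t => hrec l hl t ▸ hnext t)
      htop hl
  exact fun l hl => hdown l hl.le

/-- Forward invariance of the DHCBF hierarchy: if
`ψ_l(t) = ψ_{l-1}(t+1) - ψ_{l-1}(t) + φ_l·ψ_{l-1}(t)` for `l = 1,…,m`,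
`ψ_m(t) ≥ 0` for all `t`, and `ψ_l(0) ≥ 0` for `l = 0,…,m-1`, then
`ψ_l(t) ≥ 0` for all `l = 0,…,m-1` and all `t`. -/
theorem dhcbf_hierarchy_nonneg (m : ℕ) (hm : 1 ≤ m) (φ : ℕ → ℝ)
    (hφ : ∀ l : ℕ, 1 ≤ l → l ≤ m → 0 < φ l ∧ φ l ≤ 1)
    (ψ : ℕ → ℕ → ℝ)
    (hrec : ∀ l < m, ∀ t : ℕ,
      ψ (l + 1) t = ψ l (t + 1) - ψ l t + φ (l + 1) * ψ l t)
    (htop : ∀ t : ℕ, ψ m t ≥ 0)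
    (hinit : ∀ l < m, ψ l 0 ≥ 0) :
    ∀ l < m, ∀ t : ℕ, ψ l t ≥ 0 :=
  dhcbf_hierarchy_nonneg_general m φ hφ ψ hrec htop hinit
end

section
/- Let m ≥ 1 be a natural number and φ_1, …, φ_m ∈ (0,1] real constants. Let ψ_0, ψ_1, …, ψ_m : ℕ → ℝ be real sequences satisfying ψ_l(t) = ψ_{l−1}(t+1) − ψ_{l−1}(t) + φ_l·ψ_{l−1}(t) for all l = 1,…,m and all t ∈ ℕ. If ψ_m(t) ≥ 0 for all t ∈ ℕ and ψ_l(0) ≥ 0 for all l = 0,…,m−1, then for every l = 0,…,m−1 and every t ∈ ℕ one has the quantitative bound ψ_l(t) ≥ (1−φ_{l+1})^t · ψ_l(0). -/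
/-! If `ψ_{l+1} = Δψ_l + φ_{l+1} ψ_l` is nonnegative then `ψ_l(t+1) ≥ (1 - φ_{l+1}) ψ_l(t)`,
so `ψ_l` dominates the geometric sequence `(1 - φ_{l+1})^t ψ_l(0)`. Applied from the top level
`m` downwards, with `ψ_l(0) ≥ 0`, this makes every level nonnegative, and then the same bound
at each level is the claim. -/

namespace DHCBF

theorem geom_le_of_sub_add_mul_nonneg {u v : ℕ → ℝ} {c : ℝ} (hc : c ≤ 1)
    (hv : ∀ t, v t = u (t + 1) - u t + c * u t) (hv_nonneg : ∀ t, 0 ≤ v t) (t : ℕ) :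
    (1 - c) ^ t * u 0 ≤ u t :=
  geom_le (sub_nonneg.2 hc) t fun k _ => by linarith [hv k, hv_nonneg k]

theorem nonneg_of_sub_add_mul_nonneg {u v : ℕ → ℝ} {c : ℝ} (hc : c ≤ 1)
    (hv : ∀ t, v t = u (t + 1) - u t + c * u t) (hv_nonneg : ∀ t, 0 ≤ v t) (hu₀ : 0 ≤ u 0)
    (t : ℕ) : 0 ≤ u t :=
  (mul_nonneg (pow_nonneg (sub_nonneg.2 hc) t) hu₀).trans
    (geom_le_of_sub_add_mul_nonneg hc hv hv_nonneg t)

theorem hierarchy_nonneg {m : ℕ} {φ : ℕ → ℝ} {ψ : ℕ → ℕ → ℝ}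
    (hφ : ∀ l < m, φ (l + 1) ≤ 1)
    (hrec : ∀ l < m, ∀ t, ψ (l + 1) t = ψ l (t + 1) - ψ l t + φ (l + 1) * ψ l t)
    (htop : ∀ t, 0 ≤ ψ m t) (hinit : ∀ l < m, 0 ≤ ψ l 0) :
    ∀ l ≤ m, ∀ t, 0 ≤ ψ l t := by
  intro l hl
  induction hl using Nat.decreasingInduction with
  | self => exact htop
  | of_succ l hl ih => exact nonneg_of_sub_add_mul_nonneg (hφ l hl) (hrec l hl) ih (hinit l hl)

end DHCBF

theorem dhcbf_hierarchy_quantitative_general (m : ℕ) (φ : ℕ → ℝ)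
    (hφ : ∀ l : ℕ, 1 ≤ l → l ≤ m → 0 < φ l ∧ φ l ≤ 1)
    (ψ : ℕ → ℕ → ℝ)
    (hrec : ∀ l < m, ∀ t : ℕ,
      ψ (l + 1) t = ψ l (t + 1) - ψ l t + φ (l + 1) * ψ l t)
    (htop : ∀ t : ℕ, ψ m t ≥ 0)
    (hinit : ∀ l < m, ψ l 0 ≥ 0) :
    ∀ l < m, ∀ t : ℕ, ψ l t ≥ (1 - φ (l + 1)) ^ t * ψ l 0 := by
  have hφ_le_one : ∀ l < m, φ (l + 1) ≤ 1 := fun l hl => (hφ (l + 1) (by omega) hl).2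
  have hnonneg := DHCBF.hierarchy_nonneg hφ_le_one hrec htop hinit
  intro l hl
  exact DHCBF.geom_le_of_sub_add_mul_nonneg (hφ_le_one l hl) (hrec l hl) (hnonneg (l + 1) hl)

/-- Quantitative decay of the DHCBF hierarchy: under the recursive relation
`ψ_l(t) = ψ_{l-1}(t+1) - ψ_{l-1}(t) + φ_l·ψ_{l-1}(t)` with `ψ_m(t) ≥ 0` for
all `t` and `ψ_l(0) ≥ 0` for `l = 0,…,m-1`, each level obeys
`ψ_l(t) ≥ (1 - φ_{l+1})^t · ψ_l(0)`. -/
theorem dhcbf_hierarchy_quantitative (m : ℕ) (hm : 1 ≤ m) (φ : ℕ → ℝ)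
    (hφ : ∀ l : ℕ, 1 ≤ l → l ≤ m → 0 < φ l ∧ φ l ≤ 1)
    (ψ : ℕ → ℕ → ℝ)
    (hrec : ∀ l < m, ∀ t : ℕ,
      ψ (l + 1) t = ψ l (t + 1) - ψ l t + φ (l + 1) * ψ l t)
    (htop : ∀ t : ℕ, ψ m t ≥ 0)
    (hinit : ∀ l < m, ψ l 0 ≥ 0) :
    ∀ l < m, ∀ t : ℕ, ψ l t ≥ (1 - φ (l + 1)) ^ t * ψ l 0 :=
  dhcbf_hierarchy_quantitative_general m φ hφ ψ hrec htop hinit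
end

section
/- Let n, q ∈ ℕ, let f : ℝⁿ × ℝ^q → ℝⁿ, let U ⊆ ℝ^q be a nonempty input-constraint set, and write f̄(x) := f(x,0). Let h : ℝⁿ → ℝ, m ≥ 1, and φ_1,…,φ_m ∈ (0,1]. Define ψ_0 := h; for l = 1,…,m−1, ψ_l(x) := ψ_{l−1}(f̄(x)) − ψ_{l−1}(x) + φ_l ψ_{l−1}(x); and ψ_m(x,u) := ψ_{m−1}(f(x,u)) − ψ_{m−1}(x) + φ_m ψ_{m−1}(x). Define C^l := {x ∈ ℝⁿ : ψ_l(x) ≥ 0} for l = 0,…,m−1. Assume (RD): for all x ∈ ℝⁿ, all u ∈ U and all 0 ≤ l ≤ m−2, h(f̄^l(f(x,u))) = h(f̄^{l+1}(x)), where f̄^l is the l-fold composition of f̄. Assume (A1): for every x ∈ ℝⁿ there exists u^M ∈ U with ψ_m(x, u^M) ≥ 0. Then for every x ∈ ⋂_{l=0}^{m−1} C^l there exists u ∈ U such that ψ_m(x,u) ≥ 0 and f(x,u) ∈ ⋂_{l=0}^{m−1} C^l. -/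
/-!
Under the relative-degree condition the input cannot be seen by the first `m - 1` members
`ψ_0, …, ψ_{m-2}` of the hierarchy, so `ψ_l (f x u) = ψ_l (f̄ x)` for `l ≤ m - 2`
(by induction on `l`, comparing `ψ_l` along `f̄`-iterates of `f x u` and of `f̄ x`). Each constraint
`ψ_{l+1} ≥ 0` with `φ_{l+1} ≤ 1` and `ψ_l ≥ 0` then forces the next value `ψ_l (f̄ x)` to be
nonnegative, and the same argument applied to the DHCBF constraint given by Assumption 1 handles
`ψ_{m-1} (f x u)`.
-/

theorem nonneg_of_sub_add_mul_nonneg_s3 {R : Type*} [CommRing R] [PartialOrder R] [IsOrderedRing R]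
    {a b c : R} (ha : 0 ≤ a) (hc : c ≤ 1) (h : 0 ≤ b - a + c * a) : 0 ≤ b :=
  calc 0 ≤ (b - a + c * a) + (1 - c) * a := add_nonneg h (mul_nonneg (sub_nonneg.2 hc) ha)
    _ = b := by ring

theorem hierarchy_iterate_eq_of_base {X R : Type*} [Ring R] {F : X → X} {φ : ℕ → R}
    {ψ : ℕ → X → R} {k : ℕ}
    (hψ : ∀ l < k, ∀ x, ψ (l + 1) x = ψ l (F x) - ψ l x + φ (l + 1) * ψ l x)
    {z w : X} (hbase : ∀ j < k, ψ 0 (F^[j] z) = ψ 0 (F^[j] w)) :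
    ∀ l j, l + j < k → ψ l (F^[j] z) = ψ l (F^[j] w) := by
  intro l
  induction l with
  | zero => simpa using hbase
  | succ l ih =>
    intro j hj
    have hF : ∀ y, F (F^[j] y) = F^[j + 1] y := fun y => (Function.iterate_succ_apply' F j y).symm
    rw [hψ l (by omega), hψ l (by omega), hF, hF, ih (j + 1) (by omega), ih j (by omega)]

theorem dhcbf_one_step_viability_general
    (n q : ℕ) (f : (Fin n → ℝ) → (Fin q → ℝ) → (Fin n → ℝ))
    (U : Set (Fin q → ℝ))
    (h : (Fin n → ℝ) → ℝ) (m : ℕ) (φ : ℕ → ℝ)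
    (hφ : ∀ l : ℕ, 1 ≤ l → l ≤ m → 0 < φ l ∧ φ l ≤ 1)
    (ψ : ℕ → (Fin n → ℝ) → ℝ)
    (hψ0 : ψ 0 = h)
    (hψ : ∀ l : ℕ, l < m - 1 → ∀ x,
      ψ (l + 1) x = ψ l (f x 0) - ψ l x + φ (l + 1) * ψ l x)
    (hRD : ∀ x : Fin n → ℝ, ∀ u ∈ U, ∀ l : ℕ, l + 2 ≤ m →
      h ((fun y => f y 0)^[l] (f x u)) = h ((fun y => f y 0)^[l + 1] x))
    (hA1 : ∀ x : Fin n → ℝ, ∃ uM ∈ U,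
      ψ (m - 1) (f x uM) - ψ (m - 1) x + φ m * ψ (m - 1) x ≥ 0) :
    ∀ x : Fin n → ℝ, (∀ l < m, ψ l x ≥ 0) →
      ∃ u ∈ U, (ψ (m - 1) (f x u) - ψ (m - 1) x + φ m * ψ (m - 1) x ≥ 0) ∧
        ∀ l < m, ψ l (f x u) ≥ 0 := by
  intro x hx
  obtain ⟨u, hu, hcbf⟩ := hA1 x
  refine ⟨u, hu, hcbf, fun l hl => ?_⟩
  by_cases hlt : l + 1 < m
  · have hinvisible : ψ l (f x u) = ψ l (f x 0) :=
      hierarchy_iterate_eq_of_base hψ (fun j hj => hψ0 ▸ hRD x u hu j (by omega)) l 0 (by omega)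
    rw [hinvisible]
    exact nonneg_of_sub_add_mul_nonneg_s3 (hx l hl) (hφ (l + 1) (by omega) hl).2
      (hψ l (by omega) x ▸ hx (l + 1) hlt)
  · obtain rfl : l = m - 1 := by omega
    exact nonneg_of_sub_add_mul_nonneg_s3 (hx _ hl) (hφ m (by omega) le_rfl).2 hcbf

/-- One-step viability of the DHCBF safe set: under the relative-degree
condition (RD) and Assumption 1 (A1), from every state in the intersection
of the safe sets `C^l = {ψ_l ≥ 0}`, `l = 0,…,m-1`, there is an admissible
input `u ∈ U` satisfying the DHCBF constraint `ψ_m(x,u) ≥ 0` and keeping the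
next state `f(x,u)` in all safe sets. -/
theorem dhcbf_one_step_viability
    (n q : ℕ) (f : (Fin n → ℝ) → (Fin q → ℝ) → (Fin n → ℝ))
    (U : Set (Fin q → ℝ)) (hU : U.Nonempty)
    (h : (Fin n → ℝ) → ℝ) (m : ℕ) (hm : 1 ≤ m) (φ : ℕ → ℝ)
    (hφ : ∀ l : ℕ, 1 ≤ l → l ≤ m → 0 < φ l ∧ φ l ≤ 1)
    (ψ : ℕ → (Fin n → ℝ) → ℝ)
    (hψ0 : ψ 0 = h)
    (hψ : ∀ l : ℕ, l < m - 1 → ∀ x,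
      ψ (l + 1) x = ψ l (f x 0) - ψ l x + φ (l + 1) * ψ l x)
    (hRD : ∀ x : Fin n → ℝ, ∀ u ∈ U, ∀ l : ℕ, l + 2 ≤ m →
      h ((fun y => f y 0)^[l] (f x u)) = h ((fun y => f y 0)^[l + 1] x))
    (hA1 : ∀ x : Fin n → ℝ, ∃ uM ∈ U,
      ψ (m - 1) (f x uM) - ψ (m - 1) x + φ m * ψ (m - 1) x ≥ 0) :
    ∀ x : Fin n → ℝ, (∀ l < m, ψ l x ≥ 0) →
      ∃ u ∈ U, (ψ (m - 1) (f x u) - ψ (m - 1) x + φ m * ψ (m - 1) x ≥ 0) ∧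
        ∀ l < m, ψ l (f x u) ≥ 0 :=
  dhcbf_one_step_viability_general n q f U h m φ hφ ψ hψ0 hψ hRD hA1
end

section
/- Let n, q ∈ ℕ, let f : ℝⁿ × ℝ^q → ℝⁿ, let U ⊆ ℝ^q be a nonempty input-constraint set, and write f̄(x) := f(x,0). Let h : ℝⁿ → ℝ, m ≥ 1, and φ_1,…,φ_m ∈ (0,1]. Define ψ_0 := h; for l = 1,…,m−1, ψ_l(x) := ψ_{l−1}(f̄(x)) − ψ_{l−1}(x) + φ_l ψ_{l−1}(x); and ψ_m(x,u) := ψ_{m−1}(f(x,u)) − ψ_{m−1}(x) + φ_m ψ_{m−1}(x). Define C^l := {x ∈ ℝⁿ : ψ_l(x) ≥ 0} for l = 0,…,m−1. Assume (RD): for all x ∈ ℝⁿ, all u ∈ U and all 0 ≤ l ≤ m−2, h(f̄^l(f(x,u))) = h(f̄^{l+1}(x)). Assume (A1): for every x ∈ ℝⁿ there exists u^M ∈ U with ψ_m(x, u^M) ≥ 0. Then for every initial state x₀ ∈ ⋂_{l=0}^{m−1} C^l there exist sequences u : ℕ → ℝ^q and x : ℕ → ℝⁿ with x(0) = x₀,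 u(t) ∈ U and x(t+1) = f(x(t), u(t)) for all t ∈ ℕ, such that ψ_m(x(t), u(t)) ≥ 0 and x(t) ∈ ⋂_{l=0}^{m−1} C^l for all t ∈ ℕ; in particular h(x(t)) ≥ 0 for all t ∈ ℕ. -/
/-!
Relative degree `m` makes `ψ_l` blind to the current input for `l ≤ m - 2`:
`ψ_l (f x u) = ψ_l (f̄ x)`. Since `φ_{l+1} ≤ 1`, the recursion
`ψ_l (f̄ x) = ψ_{l+1} x + (1 - φ_{l+1}) ψ_l x` then makes `ψ_l` nonnegative one step
ahead, and for `l = m - 1` the DHCBF constraint does the same. Hence the intersection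
of the safe sets is invariant under every admissible input satisfying the constraint,
and Assumption 1 supplies such an input at every state.
-/

section Hierarchy

variable {X : Type*} {F : X → X}

theorem iterate_agree_of_sub_add_mul {g g' : X → ℝ} {c : ℝ}
    (hg' : ∀ x, g' x = g (F x) - g x + c * g x) {y z : X} {k : ℕ}
    (hagree : ∀ j ≤ k + 1, g (F^[j] y) = g (F^[j] z)) :
    ∀ j ≤ k, g' (F^[j] y) = g' (F^[j] z) := by
  intro j hj
  have hsucc := hagree (j + 1) (by omega)
  rw [Function.iterate_succ_apply', Function.iterate_succ_apply'] at hsucc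
  rw [hg', hg', hsucc, hagree j (by omega)]

theorem hierarchy_iterate_agree {ψ : ℕ → X → ℝ} {φ : ℕ → ℝ} {m : ℕ}
    (hψ : ∀ l, l < m - 1 → ∀ x, ψ (l + 1) x = ψ l (F x) - ψ l x + φ (l + 1) * ψ l x)
    {y z : X} (h₀ : ∀ j, j + 2 ≤ m → ψ 0 (F^[j] y) = ψ 0 (F^[j] z)) :
    ∀ l j, l + j + 2 ≤ m → ψ l (F^[j] y) = ψ l (F^[j] z) := by
  intro l
  induction l with
  | zero => simpa using h₀
  | succ l ih =>
    intro j hj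
    exact iterate_agree_of_sub_add_mul (hψ l (by omega)) (k := m - l - 3)
      (fun i hi => ih i (by omega)) j (by omega)

theorem nonneg_of_sub_add_mul_nonneg_s4 {a b c : ℝ} (hc : c ≤ 1) (hb : 0 ≤ b)
    (h : 0 ≤ a - b + c * b) : 0 ≤ a := by
  nlinarith

theorem hierarchy_nonneg_of_constraint {ψ : ℕ → X → ℝ} {φ : ℕ → ℝ} {m : ℕ}
    (hψ : ∀ l, l < m - 1 → ∀ x, ψ (l + 1) x = ψ l (F x) - ψ l x + φ (l + 1) * ψ l x)
    (hφ : ∀ l, 1 ≤ l → l ≤ m → φ l ≤ 1) {x y : X}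
    (hRD : ∀ j, j + 2 ≤ m → ψ 0 (F^[j] y) = ψ 0 (F^[j + 1] x))
    (hx : ∀ l < m, ψ l x ≥ 0)
    (hcon : ψ (m - 1) y - ψ (m - 1) x + φ m * ψ (m - 1) x ≥ 0) :
    ∀ l < m, ψ l y ≥ 0 := by
  intro l hl
  obtain hl₂ | rfl : l + 2 ≤ m ∨ l = m - 1 := by omega
  · have hblind : ψ l y = ψ l (F x) := by
      simpa using hierarchy_iterate_agree hψ (z := F x)
        (fun j hj => by rw [hRD j hj, Function.iterate_succ_apply]) l 0 (by omega)
    rw [hblind]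
    refine nonneg_of_sub_add_mul_nonneg_s4 (hφ (l + 1) (by omega) (by omega))
      (hx l (by omega)) ?_
    rw [← hψ l (by omega)]
    exact hx (l + 1) (by omega)
  · exact nonneg_of_sub_add_mul_nonneg_s4 (hφ m (by omega) le_rfl) (hx (m - 1) hl) hcon

end Hierarchy

theorem exists_trajectory_of_invariant {X V : Type*} (f : X → V → X) (U : Set V)
    (C : X → V → Prop) (P : X → Prop) (hsel : ∀ x, P x → ∃ u ∈ U, C x u)
    (hinv : ∀ x, P x → ∀ u ∈ U, C x u → P (f x u)) (x₀ : X) (h₀ : P x₀) :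
    ∃ u : ℕ → V, ∃ x : ℕ → X, x 0 = x₀ ∧ (∀ t, u t ∈ U) ∧
      (∀ t, x (t + 1) = f (x t) (u t)) ∧ (∀ t, C (x t) (u t)) ∧ ∀ t, P (x t) := by
  classical
  let κ : X → V := fun x => if hx : P x then (hsel x hx).choose else (hsel x₀ h₀).choose
  have hκ : ∀ x, P x → κ x ∈ U ∧ C x (κ x) := fun x hx => by
    simpa only [κ, dif_pos hx] using (hsel x hx).choose_spec
  let traj : ℕ → X := fun t => (fun x => f x (κ x))^[t] x₀
  have hstep : ∀ t, traj (t + 1) = f (traj t) (κ (traj t)) := fun t =>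
    Function.iterate_succ_apply' _ t x₀
  have hP : ∀ t, P (traj t) := by
    intro t
    induction t with
    | zero => exact h₀
    | succ t ih => rw [hstep]; exact hinv _ ih _ (hκ _ ih).1 (hκ _ ih).2
  exact ⟨fun t => κ (traj t), traj, rfl, fun t => (hκ _ (hP t)).1, hstep,
    fun t => (hκ _ (hP t)).2, hP⟩

theorem dhcbf_recursive_feasibility_general
    (n q : ℕ) (f : (Fin n → ℝ) → (Fin q → ℝ) → (Fin n → ℝ))
    (U : Set (Fin q → ℝ))
    (h : (Fin n → ℝ) → ℝ) (m : ℕ) (hm : 1 ≤ m) (φ : ℕ → ℝ)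
    (hφ : ∀ l : ℕ, 1 ≤ l → l ≤ m → 0 < φ l ∧ φ l ≤ 1)
    (ψ : ℕ → (Fin n → ℝ) → ℝ)
    (hψ0 : ψ 0 = h)
    (hψ : ∀ l : ℕ, l < m - 1 → ∀ x,
      ψ (l + 1) x = ψ l (f x 0) - ψ l x + φ (l + 1) * ψ l x)
    (hRD : ∀ x : Fin n → ℝ, ∀ u ∈ U, ∀ l : ℕ, l + 2 ≤ m →
      h ((fun y => f y 0)^[l] (f x u)) = h ((fun y => f y 0)^[l + 1] x))
    (hA1 : ∀ x : Fin n → ℝ, ∃ uM ∈ U,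
      ψ (m - 1) (f x uM) - ψ (m - 1) x + φ m * ψ (m - 1) x ≥ 0) :
    ∀ x₀ : Fin n → ℝ, (∀ l < m, ψ l x₀ ≥ 0) →
      ∃ u : ℕ → (Fin q → ℝ), ∃ x : ℕ → (Fin n → ℝ),
        x 0 = x₀ ∧ (∀ t : ℕ, u t ∈ U) ∧
        (∀ t : ℕ, x (t + 1) = f (x t) (u t)) ∧
        (∀ t : ℕ,
          ψ (m - 1) (f (x t) (u t)) - ψ (m - 1) (x t)
            + φ m * ψ (m - 1) (x t) ≥ 0) ∧
        (∀ t : ℕ, ∀ l < m, ψ l (x t) ≥ 0) ∧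
        (∀ t : ℕ, h (x t) ≥ 0) := by
  intro x₀ hx₀
  have hinv : ∀ x, (∀ l < m, ψ l x ≥ 0) → ∀ u ∈ U,
      ψ (m - 1) (f x u) - ψ (m - 1) x + φ m * ψ (m - 1) x ≥ 0 →
      ∀ l < m, ψ l (f x u) ≥ 0 := fun x hx u hu hcon =>
    hierarchy_nonneg_of_constraint hψ (fun l hl₁ hl₂ => (hφ l hl₁ hl₂).2)
      (fun j hj => by rw [hψ0]; exact hRD x u hu j hj) hx hcon
  obtain ⟨u, x, hx0, hU, hstep, hcon, hsafe⟩ :=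
    exists_trajectory_of_invariant f U _ _ (fun x _ => hA1 x) hinv x₀ hx₀
  exact ⟨u, x, hx0, hU, hstep, hcon, hsafe, fun t => hψ0 ▸ hsafe t 0 hm⟩

/-- Recursive feasibility of the DHCBF safety constraint: under (RD) and
Assumption 1, from any initial state in the intersection of the safe sets
there exist admissible input and state sequences of the closed-loop system
satisfying the DHCBF constraint and remaining in all safe sets at all times;
in particular `h(x(t)) ≥ 0` for all `t`. -/
theorem dhcbf_recursive_feasibility
    (n q : ℕ) (f : (Fin n → ℝ) → (Fin q → ℝ) → (Fin n → ℝ))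
    (U : Set (Fin q → ℝ)) (hU : U.Nonempty)
    (h : (Fin n → ℝ) → ℝ) (m : ℕ) (hm : 1 ≤ m) (φ : ℕ → ℝ)
    (hφ : ∀ l : ℕ, 1 ≤ l → l ≤ m → 0 < φ l ∧ φ l ≤ 1)
    (ψ : ℕ → (Fin n → ℝ) → ℝ)
    (hψ0 : ψ 0 = h)
    (hψ : ∀ l : ℕ, l < m - 1 → ∀ x,
      ψ (l + 1) x = ψ l (f x 0) - ψ l x + φ (l + 1) * ψ l x)
    (hRD : ∀ x : Fin n → ℝ, ∀ u ∈ U, ∀ l : ℕ, l + 2 ≤ m →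
      h ((fun y => f y 0)^[l] (f x u)) = h ((fun y => f y 0)^[l + 1] x))
    (hA1 : ∀ x : Fin n → ℝ, ∃ uM ∈ U,
      ψ (m - 1) (f x uM) - ψ (m - 1) x + φ m * ψ (m - 1) x ≥ 0) :
    ∀ x₀ : Fin n → ℝ, (∀ l < m, ψ l x₀ ≥ 0) →
      ∃ u : ℕ → (Fin q → ℝ), ∃ x : ℕ → (Fin n → ℝ),
        x 0 = x₀ ∧ (∀ t : ℕ, u t ∈ U) ∧
        (∀ t : ℕ, x (t + 1) = f (x t) (u t)) ∧
        (∀ t : ℕ,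
          ψ (m - 1) (f (x t) (u t)) - ψ (m - 1) (x t)
            + φ m * ψ (m - 1) (x t) ≥ 0) ∧
        (∀ t : ℕ, ∀ l < m, ψ l (x t) ≥ 0) ∧
        (∀ t : ℕ, h (x t) ≥ 0) :=
  dhcbf_recursive_feasibility_general n q f U h m hm φ hφ ψ hψ0 hψ hRD hA1
end

section
/- Let γ ∈ [0,1) and ε̃ ≥ 0 be real constants, let a : ℕ → ℝ and η : ℕ → ℝ be sequences with a(s) ≥ 0 and η(s) ≥ 0 for all s ∈ ℕ, and suppose η(s) ≤ γ·a(s)·(ε̃ + η(s−1)) for all s ≥ 1. Suppose moreover there exists c_max ≥ 0 such that for every t ≥ 1 and every 1 ≤ q ≤ t, ∏_{j=t−q+1}^{t} a(j) ≤ c_max. Then limsup_{t→∞} η(t) ≤ ε̃·γ·c_max/(1−γ). -/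
/-- Asymptotic bound on the accumulated estimation error in the DSMPC
stability analysis: under the recursion `η(s) ≤ γ·a(s)·(ε̃ + η(s-1))` with
`γ ∈ [0,1)`, nonnegative data, and all partial products
`∏_{j=t-q+1}^{t} a(j)` bounded by `c_max`, one has
`limsup_{t→∞} η(t) ≤ ε̃·γ·c_max/(1-γ)`. -/
theorem compatibility_error_limsup (γ eps cmax : ℝ)
    (hγ0 : 0 ≤ γ) (hγ1 : γ < 1) (heps : 0 ≤ eps) (hcmax : 0 ≤ cmax)
    (a η : ℕ → ℝ) (ha : ∀ s : ℕ, 0 ≤ a s) (hη : ∀ s : ℕ, 0 ≤ η s)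
    (hrec : ∀ s : ℕ, 1 ≤ s → η s ≤ γ * a s * (eps + η (s - 1)))
    (hprod : ∀ t : ℕ, 1 ≤ t → ∀ q : ℕ, 1 ≤ q → q ≤ t →
      (∏ j ∈ Finset.Icc (t - q + 1) t, a j) ≤ cmax) :
    Filter.limsup η Filter.atTop ≤ eps * γ * cmax / (1 - γ) := by
  set P : ℕ → ℕ → ℝ := fun t q => ∏ j ∈ Finset.Icc (t - q + 1) t, a j with hP
  have hPnn : ∀ t q, 0 ≤ P t q := fun t q => Finset.prod_nonneg (fun j _ => ha j)
  have hPsucc : ∀ t q : ℕ, q ≤ t → P (t+1) (q+1) = a (t+1) * P t q := by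
    intro t q hq
    simp only [hP]
    have h1 : (t+1) - (q+1) + 1 = t - q + 1 := by omega
    rw [h1, Finset.prod_Icc_succ_top (by omega), mul_comm]
  -- key unrolled bound
  have key : ∀ t : ℕ, 1 ≤ t →
      η t ≤ eps * ∑ q ∈ Finset.Icc 1 t, γ ^ q * P t q + γ ^ t * P t t * η 0 := by
    intro t ht
    induction t, ht using Nat.le_induction with
    | base =>
        have := hrec 1 le_rfl
        have hP11 : P 1 1 = a 1 := by simp [hP]
        simp only [Finset.Icc_self, Finset.sum_singleton, hP11, pow_one]
        nlinarith [this]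
    | succ t ht ih =>
        have hr := hrec (t+1) (by omega)
        simp only [Nat.add_sub_cancel] at hr
        have hstep : η (t+1) ≤ γ * a (t+1) * (eps +
            (eps * ∑ q ∈ Finset.Icc 1 t, γ ^ q * P t q + γ ^ t * P t t * η 0)) := by
          refine hr.trans ?_
          have hga : 0 ≤ γ * a (t+1) := mul_nonneg hγ0 (ha _)
          nlinarith [ih]
        refine hstep.trans (le_of_eq ?_)
        -- rewrite both sums over ranges
        have hsum1 : ∑ q ∈ Finset.Icc 1 t, γ ^ q * P t q
            = ∑ i ∈ Finset.range t, γ ^ (1+i) * P t (1+i) := by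
          rw [← Finset.Ico_add_one_right_eq_Icc, Finset.sum_Ico_eq_sum_range]
          simp
        have hsum2 : ∑ q ∈ Finset.Icc 1 (t+1), γ ^ q * P (t+1) q
            = ∑ i ∈ Finset.range (t+1), γ ^ (1+i) * P (t+1) (1+i) := by
          rw [← Finset.Ico_add_one_right_eq_Icc, Finset.sum_Ico_eq_sum_range]
          simp
        have hsum3 : ∑ i ∈ Finset.range (t+1), γ ^ (1+i) * P (t+1) (1+i)
            = (∑ i ∈ Finset.range t, γ ^ (1+(i+1)) * P (t+1) (1+(i+1))) + γ ^ (1+0) * P (t+1) (1+0) := by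
          exact Finset.sum_range_succ' _ t
        have hterm : ∀ i ∈ Finset.range t, γ ^ (1+(i+1)) * P (t+1) (1+(i+1))
            = γ * a (t+1) * (γ ^ (1+i) * P t (1+i)) := by
          intro i hi
          have hi' : i + 1 ≤ t := by simpa using Finset.mem_range.mp hi
          have : (1:ℕ)+(i+1) = (1+i)+1 := by omega
          rw [this, hPsucc t (1+i) (by omega)]
          ring
        have hPt1 : P (t+1) 1 = a (t+1) := by simp [hP]
        have hPtt : P (t+1) (t+1) = a (t+1) * P t t := hPsucc t t le_rfl
        rw [hsum2, hsum3, Finset.sum_congr rfl hterm, hsum1]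
        simp only [hPt1, hPtt]
        rw [← Finset.mul_sum]
        ring
  have h1γ : (0:ℝ) < 1 - γ := by linarith
  set L : ℝ := eps * γ * cmax / (1 - γ) with hL
  set C : ℝ := cmax * η 0 with hC
  -- uniform bound
  have bound : ∀ t : ℕ, 1 ≤ t → η t ≤ L + γ ^ t * C := by
    intro t ht
    have hk := key t ht
    have hsum_le : ∑ q ∈ Finset.Icc 1 t, γ ^ q * P t q
        ≤ cmax * ∑ q ∈ Finset.Icc 1 t, γ ^ q := by
      rw [Finset.mul_sum]
      refine Finset.sum_le_sum (fun q hq => ?_)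
      have hq' := Finset.mem_Icc.mp hq
      have := hprod t ht q hq'.1 hq'.2
      have hγq : (0:ℝ) ≤ γ ^ q := pow_nonneg hγ0 q
      calc γ ^ q * P t q ≤ γ ^ q * cmax := mul_le_mul_of_nonneg_left this hγq
        _ = cmax * γ ^ q := mul_comm _ _
    have hgeom : ∑ q ∈ Finset.Icc 1 t, γ ^ q ≤ γ / (1 - γ) := by
      have : ∑ q ∈ Finset.Icc 1 t, γ ^ q = γ * ∑ i ∈ Finset.range t, γ ^ i := by
        rw [← Finset.Ico_add_one_right_eq_Icc, Finset.sum_Ico_eq_sum_range, Finset.mul_sum]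
        simp [pow_succ, pow_add, mul_comm]
      rw [this]
      have hg : ∑ i ∈ Finset.range t, γ ^ i ≤ 1 / (1 - γ) := by
        have he : ∑ i ∈ Finset.range t, γ ^ i = (1 - γ ^ t) / (1 - γ) := by
          rw [geom_sum_eq (ne_of_lt hγ1), div_eq_div_iff (by linarith) (ne_of_gt h1γ)]
          ring
        rw [he]
        have hγt : (0:ℝ) ≤ γ ^ t := pow_nonneg hγ0 t
        gcongr
        linarith
      calc γ * ∑ i ∈ Finset.range t, γ ^ i ≤ γ * (1 / (1 - γ)) :=
            mul_le_mul_of_nonneg_left hg hγ0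
        _ = γ / (1 - γ) := by ring
    have hPttle : P t t ≤ cmax := hprod t ht t ht le_rfl
    have h2 : γ ^ t * P t t * η 0 ≤ γ ^ t * C := by
      have hγt : (0:ℝ) ≤ γ ^ t := pow_nonneg hγ0 t
      calc γ ^ t * P t t * η 0 ≤ γ ^ t * cmax * η 0 := by
            exact mul_le_mul_of_nonneg_right
              (mul_le_mul_of_nonneg_left hPttle hγt) (hη 0)
        _ = γ ^ t * C := by rw [hC]; ring
    have h1 : eps * ∑ q ∈ Finset.Icc 1 t, γ ^ q * P t q ≤ L := by
      calc eps * ∑ q ∈ Finset.Icc 1 t, γ ^ q * P t q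
          ≤ eps * (cmax * (γ / (1 - γ))) := by
            refine mul_le_mul_of_nonneg_left (hsum_le.trans ?_) heps
            exact mul_le_mul_of_nonneg_left hgeom hcmax
        _ = L := by rw [hL]; field_simp
    linarith
  -- limsup
  have hf : Filter.Tendsto (fun t : ℕ => L + γ ^ t * C) Filter.atTop (nhds L) := by
    have h0 : Filter.Tendsto (fun t : ℕ => γ ^ t) Filter.atTop (nhds 0) :=
      tendsto_pow_atTop_nhds_zero_of_lt_one hγ0 hγ1
    have := (h0.mul_const C).const_add L
    simpa using this
  have hbdd : Filter.IsBoundedUnder (· ≤ ·) Filter.atTop (fun t : ℕ => L + γ ^ t * C) :=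
    hf.isBoundedUnder_le
  have hcob : Filter.IsCoboundedUnder (· ≤ ·) Filter.atTop η :=
    Filter.isCoboundedUnder_le_of_eventually_le Filter.atTop
      (x := 0) (Filter.Eventually.of_forall hη)
  have hev : η ≤ᶠ[Filter.atTop] fun t : ℕ => L + γ ^ t * C := by
    filter_upwards [Filter.eventually_ge_atTop 1] with t ht using bound t ht
  calc Filter.limsup η Filter.atTop
      ≤ Filter.limsup (fun t : ℕ => L + γ ^ t * C) Filter.atTop :=
        Filter.limsup_le_limsup hev hcob hbdd
    _ = L := hf.limsup_eq
end

section
/- Let E be a real normed vector space, let γ ∈ [0,1) and ε̃ ≥ 0 be real constants, let a : ℕ → ℝ and η : ℕ → ℝ be sequences with a(s) ≥ 0 and η(s) ≥ 0 for all s ∈ ℕ, satisfying η(s) ≤ γ·a(s)·(ε̃ + η(s−1)) for all s ≥ 1, and suppose there exists c_max ≥ 0 such that ∏_{j=t−q+1}^{t} a(j) ≤ c_max for every t ≥ 1 and 1 ≤ q ≤ t. Let y : ℕ → E be a sequence and T₀ ∈ ℕ such that ‖y(t)‖ ≤ ε̃ + η(t) for all t ≥ T₀. Then limsup_{t→∞}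 ‖y(t)‖ ≤ ε̃·(1 + γ·c_max/(1−γ)); in particular, for every ε > ε̃·(1 + γ·c_max/(1−γ)) there exists T such that ‖y(t)‖ ≤ ε for all t ≥ T. -/
/-- Asymptotic formation bound achieved by the DSMPC algorithm (Theorem 2):
under the compatibility-error recursion with bounded partial products, if the
formation error satisfies `‖y(t)‖ ≤ ε̃ + η(t)` for all large `t`, then
`limsup_{t→∞} ‖y(t)‖ ≤ ε̃·(1 + γ·c_max/(1-γ))`; in particular for every
`ε` above this bound, `‖y(t)‖ ≤ ε` eventually. -/
theorem dsmpc_formation_bound {E : Type*} [NormedAddCommGroup E]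
    [NormedSpace ℝ E] (γ eps cmax : ℝ)
    (hγ0 : 0 ≤ γ) (hγ1 : γ < 1) (heps : 0 ≤ eps) (hcmax : 0 ≤ cmax)
    (a η : ℕ → ℝ) (ha : ∀ s : ℕ, 0 ≤ a s) (hη : ∀ s : ℕ, 0 ≤ η s)
    (hrec : ∀ s : ℕ, 1 ≤ s → η s ≤ γ * a s * (eps + η (s - 1)))
    (hprod : ∀ t : ℕ, 1 ≤ t → ∀ q : ℕ, 1 ≤ q → q ≤ t →
      (∏ j ∈ Finset.Icc (t - q + 1) t, a j) ≤ cmax)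
    (y : ℕ → E) (T₀ : ℕ) (hy : ∀ t : ℕ, T₀ ≤ t → ‖y t‖ ≤ eps + η t) :
    Filter.limsup (fun t => ‖y t‖) Filter.atTop
        ≤ eps * (1 + γ * cmax / (1 - γ)) ∧
      ∀ ε : ℝ, eps * (1 + γ * cmax / (1 - γ)) < ε →
        ∃ T : ℕ, ∀ t : ℕ, T ≤ t → ‖y t‖ ≤ ε := by
  have h1γ : (0:ℝ) < 1 - γ := by linarith
  set L : ℝ := eps * (1 + γ * cmax / (1 - γ)) with hL
  -- nonnegativity of partial products
  have hP : ∀ m n : ℕ, 0 ≤ ∏ j ∈ Finset.Icc m n, a j := fun m n =>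
    Finset.prod_nonneg (fun j _ => ha j)
  -- unfolding the recursion q steps
  have key : ∀ q : ℕ, 1 ≤ q → ∀ t : ℕ, q ≤ t →
      η t ≤ eps * ∑ r ∈ Finset.Icc 1 q, γ ^ r * ∏ j ∈ Finset.Icc (t - r + 1) t, a j
        + γ ^ q * (∏ j ∈ Finset.Icc (t - q + 1) t, a j) * η (t - q) := by
    intro q
    induction q with
    | zero => intro h; omega
    | succ q ih =>
      intro _ t hqt
      rcases Nat.eq_zero_or_pos q with hq0 | hq1
      · subst hq0
        have ht1 : 1 ≤ t := hqt
        have h0 := hrec t ht1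
        have he : Finset.Icc (t - 1 + 1) t = {t} := by
          rw [show t - 1 + 1 = t by omega, Finset.Icc_self]
        simp only [zero_add, Finset.Icc_self, Finset.sum_singleton, pow_one, he,
          Finset.prod_singleton]
        linarith [h0, show γ * a t * (eps + η (t - 1))
          = eps * (γ * a t) + γ * a t * η (t - 1) from by ring]
      · have hqt' : q ≤ t := by omega
        have hmain := ih hq1 t hqt'
        -- bound the trailing term using the recursion at t - q
        have htq1 : 1 ≤ t - q := by omega
        have hrec' := hrec (t - q) htq1
        have hnn : 0 ≤ γ ^ q * ∏ j ∈ Finset.Icc (t - q + 1) t, a j :=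
          mul_nonneg (pow_nonneg hγ0 q) (hP _ _)
        have hstep : γ ^ q * (∏ j ∈ Finset.Icc (t - q + 1) t, a j) * η (t - q)
            ≤ γ ^ (q + 1) * (∏ j ∈ Finset.Icc (t - (q + 1) + 1) t, a j) * (eps + η (t - q - 1)) := by
          have hins : Finset.Icc (t - (q + 1) + 1) t
              = insert (t - q) (Finset.Icc (t - q + 1) t) := by
            ext x
            simp only [Finset.mem_Icc, Finset.mem_insert]
            omega
          have hnotmem : t - q ∉ Finset.Icc (t - q + 1) t := by
            simp only [Finset.mem_Icc]; omega
          rw [hins, Finset.prod_insert hnotmem]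
          calc γ ^ q * (∏ j ∈ Finset.Icc (t - q + 1) t, a j) * η (t - q)
              ≤ γ ^ q * (∏ j ∈ Finset.Icc (t - q + 1) t, a j)
                * (γ * a (t - q) * (eps + η (t - q - 1))) := by
                exact mul_le_mul_of_nonneg_left hrec' hnn
            _ = γ ^ (q + 1) * (a (t - q) * ∏ j ∈ Finset.Icc (t - q + 1) t, a j)
                * (eps + η (t - q - 1)) := by ring
        have hsum : eps * ∑ r ∈ Finset.Icc 1 (q + 1), γ ^ r * ∏ j ∈ Finset.Icc (t - r + 1) t, a j
            = eps * ∑ r ∈ Finset.Icc 1 q, γ ^ r * ∏ j ∈ Finset.Icc (t - r + 1) t, a j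
              + eps * (γ ^ (q + 1) * ∏ j ∈ Finset.Icc (t - (q + 1) + 1) t, a j) := by
          rw [Finset.sum_Icc_succ_top (by omega : 1 ≤ q + 1)]
          ring
        have htq : t - q - 1 = t - (q + 1) := by omega
        rw [htq] at hstep
        calc η t ≤ eps * ∑ r ∈ Finset.Icc 1 q, γ ^ r * ∏ j ∈ Finset.Icc (t - r + 1) t, a j
              + γ ^ q * (∏ j ∈ Finset.Icc (t - q + 1) t, a j) * η (t - q) := hmain
          _ ≤ eps * ∑ r ∈ Finset.Icc 1 q, γ ^ r * ∏ j ∈ Finset.Icc (t - r + 1) t, a j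
              + γ ^ (q + 1) * (∏ j ∈ Finset.Icc (t - (q + 1) + 1) t, a j)
                * (eps + η (t - (q + 1))) := by linarith
          _ = eps * ∑ r ∈ Finset.Icc 1 (q + 1), γ ^ r * ∏ j ∈ Finset.Icc (t - r + 1) t, a j
              + γ ^ (q + 1) * (∏ j ∈ Finset.Icc (t - (q + 1) + 1) t, a j) * η (t - (q + 1)) := by
            rw [hsum]; ring
  -- geometric sum bound
  have hgeom : ∀ q : ℕ, (∑ r ∈ Finset.Icc 1 q, γ ^ r) ≤ γ / (1 - γ) := by
    intro q
    have h1 : ∑ r ∈ Finset.Icc 1 q, γ ^ r = γ * ∑ i ∈ Finset.range q, γ ^ i := by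
      rw [← Finset.Ico_add_one_right_eq_Icc, Finset.sum_Ico_eq_sum_range, Finset.mul_sum]
      exact Finset.sum_congr rfl fun i _ => by rw [pow_add, pow_one]
    have h2 : (∑ i ∈ Finset.range q, γ ^ i) ≤ 1 / (1 - γ) := by
      rw [le_div_iff₀ h1γ]
      have := geom_sum_mul γ q
      nlinarith [pow_nonneg hγ0 q]
    rw [h1, div_eq_mul_one_div γ (1 - γ)]
    exact mul_le_mul_of_nonneg_left h2 hγ0
  -- main eventual bound: ‖y t‖ ≤ L + γ^t * (cmax * η 0)
  have hbound : ∀ t : ℕ, max 1 T₀ ≤ t → ‖y t‖ ≤ L + γ ^ t * (cmax * η 0) := by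
    intro t ht
    have ht1 : 1 ≤ t := le_trans (le_max_left _ _) ht
    have htT : T₀ ≤ t := le_trans (le_max_right _ _) ht
    have hk := key t ht1 t le_rfl
    have hsum_le : eps * ∑ r ∈ Finset.Icc 1 t, γ ^ r * ∏ j ∈ Finset.Icc (t - r + 1) t, a j
        ≤ eps * (cmax * (γ / (1 - γ))) := by
      apply mul_le_mul_of_nonneg_left _ heps
      calc ∑ r ∈ Finset.Icc 1 t, γ ^ r * ∏ j ∈ Finset.Icc (t - r + 1) t, a j
          ≤ ∑ r ∈ Finset.Icc 1 t, γ ^ r * cmax := by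
            apply Finset.sum_le_sum
            intro r hr
            simp only [Finset.mem_Icc] at hr
            exact mul_le_mul_of_nonneg_left (hprod t ht1 r hr.1 hr.2) (pow_nonneg hγ0 r)
        _ = (∑ r ∈ Finset.Icc 1 t, γ ^ r) * cmax := by rw [Finset.sum_mul]
        _ ≤ γ / (1 - γ) * cmax := mul_le_mul_of_nonneg_right (hgeom t) hcmax
        _ = cmax * (γ / (1 - γ)) := by ring
    have htt : t - t = 0 := Nat.sub_self t
    have hη_le : η t ≤ eps * (cmax * (γ / (1 - γ))) + γ ^ t * (cmax * η 0) := by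
      have hP_le : γ ^ t * (∏ j ∈ Finset.Icc (t - t + 1) t, a j) * η (t - t)
          ≤ γ ^ t * (cmax * η 0) := by
        rw [htt]
        have h1 := hprod t ht1 t ht1 le_rfl
        rw [htt] at h1
        have h0 : 0 ≤ γ ^ t := pow_nonneg hγ0 t
        nlinarith [hη 0, hP (0 + 1) t, mul_nonneg h0 (hη 0)]
      linarith
    have := hy t htT
    have hLeq : eps + eps * (cmax * (γ / (1 - γ))) = L := by
      rw [hL]; field_simp
    linarith
  have hC0 : 0 ≤ cmax * η 0 := mul_nonneg hcmax (hη 0)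
  -- the perturbation tends to 0
  have htend : Filter.Tendsto (fun t : ℕ => L + γ ^ t * (cmax * η 0)) Filter.atTop (nhds L) := by
    have : Filter.Tendsto (fun t : ℕ => γ ^ t * (cmax * η 0)) Filter.atTop (nhds 0) := by
      simpa using (tendsto_pow_atTop_nhds_zero_of_lt_one hγ0 hγ1).mul_const (cmax * η 0)
    simpa using tendsto_const_nhds.add this
  have hev : ∀ᶠ t in Filter.atTop, ‖y t‖ ≤ L + γ ^ t * (cmax * η 0) :=
    Filter.eventually_atTop.2 ⟨max 1 T₀, hbound⟩
  constructor
  · calc Filter.limsup (fun t => ‖y t‖) Filter.atTop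
        ≤ Filter.limsup (fun t : ℕ => L + γ ^ t * (cmax * η 0)) Filter.atTop := by
          exact Filter.limsup_le_limsup hev
            (hu := Filter.isCoboundedUnder_le_of_le Filter.atTop (fun i => norm_nonneg (y i)))
            (hv := htend.isBoundedUnder_le)
      _ = L := htend.limsup_eq
  · intro ε hε
    have : ∀ᶠ t in Filter.atTop, γ ^ t * (cmax * η 0) < ε - L := by
      have : Filter.Tendsto (fun t : ℕ => γ ^ t * (cmax * η 0)) Filter.atTop (nhds 0) := by
        simpa using (tendsto_pow_atTop_nhds_zero_of_lt_one hγ0 hγ1).mul_const (cmax * η 0)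
      exact this.eventually_lt_const (by linarith)
    rcases Filter.eventually_atTop.1 (hev.and this) with ⟨T, hT⟩
    exact ⟨T, fun t ht => by have := hT t ht; linarith [this.1, this.2]⟩
end
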